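/- arXiv:1305.2580 — 4 statements merged into one kernel-verified Lean document; each statement's English description precedes it below -/
import Mathlib

section
/- Let k be a finite field with q elements, k_f its degree-f extension, and e > 0 a divisor of q^f − 1. For ξ ∈ k_f^×, the condition ξ^{q−1} ∈ (k_f^×)^e is equivalent to the condition ξ^{(q^f−1)/e} ∈ k^×. -/
/-!
The group `k_fˣ` is cyclic of order `n = q^f - 1`. In a finite cyclic group of order `n` the
`e`-th powers are exactly the solutions of `x^(n/e) = 1`, and `kˣ` sits inside `k_fˣ` as the
group of `(q-1)`-th roots of unity, since it has `q - 1` elements, all of them roots of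
`X^(q-1) - 1`. Both conditions therefore say `ξ^((q-1) n / e) = 1`.
-/

theorem IsCyclic.range_powMonoidHom_eq_ker {G : Type*} [CommGroup G] [IsCyclic G] [Finite G]
    {e : ℕ} (he : e ∣ Nat.card G) :
    (powMonoidHom e : G →* G).range = (powMonoidHom (Nat.card G / e)).ker := by
  refine Subgroup.eq_of_le_of_card_ge ?_ ?_
  · rintro _ ⟨x, rfl⟩
    rw [MonoidHom.mem_ker, powMonoidHom_apply, powMonoidHom_apply, ← pow_mul,
      Nat.mul_div_cancel' he, pow_card_eq_one']
  · rw [IsCyclic.card_powMonoidHom_ker, IsCyclic.card_powMonoidHom_range,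
      Nat.gcd_eq_right he, Nat.gcd_eq_right (Nat.div_dvd_of_dvd he)]

theorem FiniteField.range_unitsMap_algebraMap_eq_rootsOfUnity (K L : Type*) [Field K]
    [Finite K] [CommRing L] [IsDomain L] [Algebra K L] :
    (Units.map (algebraMap K L).toMonoidHom).range = rootsOfUnity (Nat.card K - 1) L := by
  have : NeZero (Nat.card K - 1) := ⟨Nat.sub_ne_zero_of_lt Finite.one_lt_card⟩
  refine Subgroup.eq_of_le_of_card_ge ?_ ?_
  · rintro _ ⟨a, rfl⟩
    rw [mem_rootsOfUnity, ← map_pow, ← Nat.card_units, pow_card_eq_one', map_one]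
  · calc Nat.card (rootsOfUnity (Nat.card K - 1) L) ≤ Nat.card K - 1 := card_rootsOfUnity _ _
      _ = Nat.card Kˣ := (Nat.card_units K).symm
      _ = _ := (Nat.card_range_of_injective (Units.map_injective (algebraMap K L).injective)).symm

theorem stmt_5_general (q f e : ℕ) (k kf : Type) [Field k] [Field kf] [Algebra k kf]
    [Fintype k] [Fintype kf]
    (hq : Fintype.card k = q) (hqf : Fintype.card kf = q ^ f) (hef : e ∣ q ^ f - 1)
    (ξ : kfˣ) :
    ξ ^ (q - 1) ∈ (powMonoidHom e : kfˣ →* kfˣ).range ↔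
    ξ ^ ((q ^ f - 1) / e) ∈ (Units.map (algebraMap k kf).toMonoidHom).range := by
  have hcard : Nat.card kfˣ = q ^ f - 1 := by
    rw [Nat.card_units, Nat.card_eq_fintype_card, hqf]
  rw [IsCyclic.range_powMonoidHom_eq_ker (hcard ▸ hef), hcard,
    FiniteField.range_unitsMap_algebraMap_eq_rootsOfUnity, Nat.card_eq_fintype_card, hq,
    MonoidHom.mem_ker, mem_rootsOfUnity, powMonoidHom_apply, ← pow_mul, ← pow_mul, mul_comm]

/-- **Two equivalent conditions on `ξ ∈ k_fˣ`.**  Let `k ⊆ k_f` be finite fields of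
cardinalities `q` and `q^f`, and let `e > 0` divide `q^f - 1`.  For `ξ ∈ k_fˣ`, the condition
`ξ^(q-1) ∈ (k_fˣ)^e` is equivalent to `ξ^((q^f-1)/e) ∈ k^×` (where `k^×` is identified with
its image in `k_fˣ`). -/
theorem stmt_5 (q f e : ℕ) (he : 0 < e) (k kf : Type) [Field k] [Field kf] [Algebra k kf]
    [Fintype k] [Fintype kf]
    (hq : Fintype.card k = q) (hqf : Fintype.card kf = q ^ f) (hef : e ∣ q ^ f - 1)
    (ξ : kfˣ) :
    ξ ^ (q - 1) ∈ (powMonoidHom e : kfˣ →* kfˣ).range ↔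
    ξ ^ ((q ^ f - 1) / e) ∈ (Units.map (algebraMap k kf).toMonoidHom).range :=
  stmt_5_general q f e k kf hq hqf hef ξ
end

section
/- Let k be a finite field with q elements, k_f its degree-f extension, e | q^f − 1, and ξ ∈ k_f^× with ξ^{q−1} = α^e and ξ^{(q^f−1)/e} = β^S where S = 1+q+···+q^{f−1}. Then there exists η ∈ μ_e (an e-th root of unity in k_f^×) with η^S = (βα^{−1})^S; hence α^S and β^S have the same class in μ_e modulo Im((·)^S). -/
/-- **Comparison of the two classes `α^S` and `β^S`.**  Let `k ⊆ k_f` be finite fields with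
`|k| = q`, `|k_f| = q^f`, let `e ∣ q^f - 1` and `S = 1 + q + ⋯ + q^(f-1)`.  Suppose
`ξ ∈ k_fˣ` satisfies `ξ^(q-1) = α^e` and `ξ^((q^f-1)/e) = β^S`.  Then there exists an `e`-th
root of unity `η ∈ k_fˣ` with `η^S = (βα⁻¹)^S`; hence `α^S` and `β^S` have the same class
in `μ_e` modulo `Im((·)^S)`. -/
theorem stmt_8 (q f e : ℕ) (he : 0 < e) (kf : Type*) [Field kf] [Fintype kf]
    (hqf : Fintype.card kf = q ^ f) (hef : e ∣ q ^ f - 1)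
    (S : ℕ) (hS : S = ∑ i ∈ Finset.range f, q ^ i)
    (ξ α β : kfˣ) (hα : ξ ^ (q - 1) = α ^ e) (hβ : ξ ^ ((q ^ f - 1) / e) = β ^ S) :
    ∃ η : kfˣ, η ^ e = 1 ∧ η ^ S = (β * α⁻¹) ^ S := by
  classical
  have hcard : 1 < Fintype.card kf := Fintype.one_lt_card
  have hq : 1 ≤ q := by
    rcases Nat.eq_zero_or_pos q with rfl | h
    · rw [hqf] at hcard
      rcases Nat.eq_zero_or_pos f with rfl | hf
      · simp at hcard
      · rw [Nat.zero_pow hf] at hcard; omega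
    · exact h
  have hpow : 1 ≤ q ^ f := Nat.one_le_pow _ _ hq
  -- (q-1) * S = q^f - 1
  have hNZ : ((q : ℤ) - 1) * (S : ℤ) = (q : ℤ) ^ f - 1 := by
    rw [hS]; push_cast; rw [mul_comm]; exact geom_sum_mul _ _
  -- a generator
  obtain ⟨g, hg⟩ := IsCyclic.exists_generator (α := kfˣ)
  have horder : (orderOf g : ℤ) = (q : ℤ) ^ f - 1 := by
    have h1 : orderOf g = Fintype.card kfˣ := by
      rw [← Nat.card_eq_fintype_card]; exact orderOf_eq_card_of_forall_mem_zpowers hg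
    have h2 : Fintype.card kfˣ = q ^ f - 1 := by
      rw [Fintype.card_units, hqf]
    rw [h1, h2]
    push_cast [hpow]
    ring
  obtain ⟨x, hx⟩ := hg ξ
  obtain ⟨a, ha⟩ := hg α
  have hx' : g ^ x = ξ := hx
  have ha' : g ^ a = α := ha
  -- from hα : order divides x*(q-1) - a*e
  have hkey : ((q : ℤ) ^ f - 1) ∣ x * ((q : ℤ) - 1) - a * e := by
    rw [← horder, orderOf_dvd_iff_zpow_eq_one]
    have : g ^ (x * ((q : ℤ) - 1)) = g ^ (a * (e : ℤ)) := by
      have hq' : ((q - 1 : ℕ) : ℤ) = (q : ℤ) - 1 := by push_cast [hq]; ring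
      rw [← hq', zpow_mul, zpow_mul, zpow_natCast, zpow_natCast, hx', ha', hα]
    rw [zpow_sub, this, mul_inv_cancel]
  have hdvd_e : (e : ℤ) ∣ x * ((q : ℤ) - 1) := by
    obtain ⟨k, hk⟩ := hkey
    have heN : (e : ℤ) ∣ (q : ℤ) ^ f - 1 := by
      obtain ⟨m, hm⟩ := hef
      refine ⟨m, ?_⟩
      have : ((q ^ f - 1 : ℕ) : ℤ) = (q : ℤ) ^ f - 1 := by push_cast [hpow]; ring
      rw [← this, hm]; push_cast; ring
    have : x * ((q : ℤ) - 1) = a * e + ((q : ℤ) ^ f - 1) * k := by linarith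
    rw [this]
    exact dvd_add (Dvd.intro_left _ rfl) (Dvd.dvd.mul_right heN k)
  obtain ⟨v, hv⟩ := hdvd_e
  -- ζ := g ^ v
  set ζ : kfˣ := g ^ v with hζ
  have hζe : ζ ^ e = ξ ^ (q - 1) := by
    have hq' : ((q - 1 : ℕ) : ℤ) = (q : ℤ) - 1 := by push_cast [hq]; ring
    rw [← hx', hζ, ← zpow_natCast (g ^ v) e, ← zpow_mul,
      ← zpow_natCast (g ^ x) (q - 1), ← zpow_mul]
    congr 1
    rw [hq']
    linarith [hv]
  have hvS : v * (S : ℤ) = x * (((q ^ f - 1) / e : ℕ) : ℤ) := by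
    have hdivcast : (e : ℤ) * (((q ^ f - 1) / e : ℕ) : ℤ) = (q : ℤ) ^ f - 1 := by
      have : e * ((q ^ f - 1) / e) = q ^ f - 1 := Nat.mul_div_cancel' hef
      rw [← Nat.cast_mul, this, Nat.cast_sub hpow, Nat.cast_pow]; norm_num
    have hecancel : (e : ℤ) * (v * (S : ℤ)) = (e : ℤ) * (x * (((q ^ f - 1) / e : ℕ) : ℤ)) := by
      calc (e : ℤ) * (v * (S : ℤ)) = (x * ((q : ℤ) - 1)) * S := by rw [hv]; ring
        _ = x * (((q : ℤ) - 1) * S) := by ring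
        _ = x * ((q : ℤ) ^ f - 1) := by rw [hNZ]
        _ = (e : ℤ) * (x * (((q ^ f - 1) / e : ℕ) : ℤ)) := by rw [← hdivcast]; ring
    have he' : (e : ℤ) ≠ 0 := by exact_mod_cast he.ne'
    exact mul_left_cancel₀ he' hecancel
  have hζS : ζ ^ S = β ^ S := by
    rw [hζ, ← zpow_natCast (g ^ v) S, ← zpow_mul, hvS, ← hβ, ← hx',
      ← zpow_natCast (g ^ x) ((q ^ f - 1) / e), ← zpow_mul]
  refine ⟨ζ * α⁻¹, ?_, ?_⟩
  · rw [mul_pow, hζe, hα, inv_pow, mul_inv_cancel]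
  · rw [mul_pow, hζS, mul_pow, inv_pow]
end

section
/- Let k be a finite field with q elements, k_f its degree-f extension, e | q^f − 1, and ξ ∈ k_f^×. Let d be the order of the image of ξ^{q−1} in k_f^×/(k_f^×)^e. Then the smallest multiple f' of f such that ξ^{q−1} becomes an e-th power in the degree-f' extension k_{f'} of k is f' = d·f. -/
/-- Inside the algebraic closure `Ω` of the finite field `k` of cardinality `q`, the subgroup
`{x ∈ Ωˣ | x^(q^m - 1) = 1}`, i.e. the multiplicative group of the degree-`m` extension
`k_m` of `k`. -/
noncomputable def stmt9Subfield (k : Type*) [Field k] (N : ℕ) : Subgroup (AlgebraicClosure k)ˣ :=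
  (powMonoidHom N : (AlgebraicClosure k)ˣ →* (AlgebraicClosure k)ˣ).ker

/-
The group `k_mˣ` is the cyclic group of `(q^m - 1)`-th roots of unity in the algebraic closure,
and in a finite cyclic group of order `N` with `e ∣ N` the `e`-th powers are exactly the kernel of
`x ↦ x^(N/e)`. With `n = q^f - 1` and `z = ξ^(q-1)`, this identifies `d` with the order of
`w = z^(n/e)`, and shows that `z` is an `e`-th power in `k_{fs}` iff `z^((q^(fs) - 1)/e) = 1`.
Since `(q^(fs) - 1)/e = (n/e) · ∑_{i<s} q^(fi)` and the sum is `≡ s mod e` while `w^e = 1`,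
this is `w^s = 1`, i.e. `d ∣ s`.
-/

open Finset

theorem Nat.geomSum_modEq_of_modEq_one {a e : ℕ} (h : a ≡ 1 [MOD e]) (s : ℕ) :
    ∑ i ∈ range s, a ^ i ≡ s [MOD e] := by
  induction s with
  | zero => rfl
  | succ s ih =>
    rw [sum_range_succ]
    exact ih.add (by simpa using h.pow s)

theorem pow_div_eq_pow_pow_of_pow_sub_one_eq_one {M : Type*} [Monoid M] {x : M} {a e : ℕ}
    (ha : 0 < a) (hx : x ^ (a - 1) = 1) (he : e ∣ a - 1) (s : ℕ) :
    x ^ ((a ^ s - 1) / e) = (x ^ ((a - 1) / e)) ^ s := by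
  obtain ⟨b, rfl⟩ := Nat.exists_eq_add_one_of_ne_zero ha.ne'
  rw [Nat.add_sub_cancel] at hx he ⊢
  have hgeom : (b + 1) ^ s - 1 = b * ∑ i ∈ range s, (b + 1) ^ i := by
    rw [← geom_sum_mul_add b s, Nat.add_sub_cancel, mul_comm]
  have horder : orderOf (x ^ (b / e)) ∣ e :=
    orderOf_dvd_of_pow_eq_one (by rw [← pow_mul, Nat.div_mul_cancel he, hx])
  have hsum : ∑ i ∈ range s, (b + 1) ^ i ≡ s [MOD e] :=
    Nat.geomSum_modEq_of_modEq_one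
      ((Nat.modEq_iff_dvd' (by omega)).mpr (by simpa using he)).symm s
  rw [hgeom, ← Nat.div_mul_right_comm he, pow_mul, ← pow_mod_orderOf, hsum.of_dvd horder,
    pow_mod_orderOf]

namespace IsCyclic

variable {G : Type*} [CommGroup G] [IsCyclic G] [Finite G] {e : ℕ}

theorem range_powMonoidHom_eq_ker_s9 (he : e ∣ Nat.card G) :
    (powMonoidHom e : G →* G).range = (powMonoidHom (Nat.card G / e)).ker := by
  have hrange : Nat.card G / e ∣ Nat.card G := Nat.div_dvd_of_dvd he
  refine Subgroup.eq_of_le_of_card_ge ?_ ?_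
  · rintro _ ⟨y, rfl⟩
    simp [← pow_mul, Nat.mul_div_cancel' he, pow_card_eq_one']
  · rw [card_powMonoidHom_ker, card_powMonoidHom_range, Nat.gcd_eq_right he,
      Nat.gcd_eq_right hrange]

theorem orderOf_mk_range_powMonoidHom (he : e ∣ Nat.card G) (x : G) :
    orderOf (x : G ⧸ (powMonoidHom e : G →* G).range) = orderOf (x ^ (Nat.card G / e)) := by
  refine orderOf_eq_orderOf_iff.mpr fun s => ?_
  rw [← QuotientGroup.mk_pow, QuotientGroup.eq_one_iff, range_powMonoidHom_eq_ker_s9 he,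
    MonoidHom.mem_ker, powMonoidHom_apply, ← pow_mul, ← pow_mul, mul_comm]

end IsCyclic

theorem HasEnoughRootsOfUnity.exists_pow_eq_iff_pow_div_eq_one {M : Type*} [CommMonoid M]
    {N e : ℕ} [NeZero N] [HasEnoughRootsOfUnity M N] (he : e ∣ N) {z : Mˣ} (hz : z ^ N = 1) :
    (∃ y : Mˣ, y ^ N = 1 ∧ y ^ e = z) ↔ z ^ (N / e) = 1 := by
  have hcard := HasEnoughRootsOfUnity.natCard_rootsOfUnity M N
  have hmem := SetLike.ext_iff.mp
    (IsCyclic.range_powMonoidHom_eq_ker_s9 (G := rootsOfUnity N M) (hcard ▸ he))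
    ⟨z, (mem_rootsOfUnity N z).mpr hz⟩
  rw [hcard] at hmem
  simpa only [MonoidHom.mem_range, MonoidHom.mem_ker, powMonoidHom_apply, Subtype.ext_iff,
    Subtype.exists, mem_rootsOfUnity, Subgroup.coe_pow, OneMemClass.coe_one, exists_prop] using hmem

namespace FiniteField

variable {k : Type*} [Field k] [Fintype k]

theorem neZero_natCast_card_pow_sub_one {m : ℕ} (hm : m ≠ 0) :
    NeZero ((Fintype.card k ^ m - 1 : ℕ) : k) := by
  refine ⟨?_⟩
  rw [Nat.cast_sub (Nat.one_le_pow _ _ Fintype.card_pos), Nat.cast_pow, cast_card_eq_zero,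
    zero_pow hm]
  simp

theorem exists_pow_eq_iff_orderOf_dvd {f e s : ℕ} (hf : f ≠ 0) (hs : s ≠ 0)
    (he : e ∣ Fintype.card k ^ f - 1) {z : (AlgebraicClosure k)ˣ}
    (hz : z ^ (Fintype.card k ^ f - 1) = 1) :
    (∃ y : (AlgebraicClosure k)ˣ, y ^ (Fintype.card k ^ (f * s) - 1) = 1 ∧ y ^ e = z) ↔
      orderOf (z ^ ((Fintype.card k ^ f - 1) / e)) ∣ s := by
  obtain ⟨c, hc⟩ := Nat.pow_sub_one_dvd_pow_sub_one (Fintype.card k) (dvd_mul_right f s)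
  have hzfs : z ^ (Fintype.card k ^ (f * s) - 1) = 1 := by rw [hc, pow_mul, hz, one_pow]
  have := neZero_natCast_card_pow_sub_one (k := k) (mul_ne_zero hf hs)
  have : NeZero (Fintype.card k ^ (f * s) - 1) := .of_neZero_natCast k
  rw [HasEnoughRootsOfUnity.exists_pow_eq_iff_pow_div_eq_one (he.trans ⟨c, hc⟩) hzfs, pow_mul,
    pow_div_eq_pow_pow_of_pow_sub_one_eq_one (pow_pos Fintype.card_pos f) hz he,
    orderOf_dvd_iff_pow_eq_one]

end FiniteField

-- `stmt9Subfield k N` is definitionally `rootsOfUnity N (AlgebraicClosure k)`.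
namespace stmt9Subfield

variable {k : Type*} [Field k] [Fintype k] {m : ℕ}

theorem finite (hm : m ≠ 0) : Finite (stmt9Subfield k (Fintype.card k ^ m - 1)) :=
  have := FiniteField.neZero_natCast_card_pow_sub_one (k := k) hm
  have : NeZero (Fintype.card k ^ m - 1) := .of_neZero_natCast k
  inferInstanceAs (Finite (rootsOfUnity _ _))

theorem orderOf_mk_range_powMonoidHom {e : ℕ} (hm : m ≠ 0) (he : e ∣ Fintype.card k ^ m - 1)
    (x : stmt9Subfield k (Fintype.card k ^ m - 1)) :
    orderOf (x : stmt9Subfield k (Fintype.card k ^ m - 1) ⧸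
        (powMonoidHom e : stmt9Subfield k (Fintype.card k ^ m - 1) →* _).range) =
      orderOf ((x : (AlgebraicClosure k)ˣ) ^ ((Fintype.card k ^ m - 1) / e)) := by
  have := FiniteField.neZero_natCast_card_pow_sub_one (k := k) hm
  have : NeZero (Fintype.card k ^ m - 1) := .of_neZero_natCast k
  have : IsCyclic (stmt9Subfield k (Fintype.card k ^ m - 1)) :=
    inferInstanceAs (IsCyclic (rootsOfUnity _ _))
  have : Finite (stmt9Subfield k (Fintype.card k ^ m - 1)) := finite hm
  have hcard : Nat.card (stmt9Subfield k (Fintype.card k ^ m - 1)) = Fintype.card k ^ m - 1 :=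
    HasEnoughRootsOfUnity.natCard_rootsOfUnity _ _
  rw [IsCyclic.orderOf_mk_range_powMonoidHom (by rwa [hcard]), hcard, ← Subgroup.orderOf_coe,
    Subgroup.coe_pow]

end stmt9Subfield

theorem stmt_9_general (k : Type*) [Field k] [Fintype k] (q f e : ℕ)
    (hq : Fintype.card k = q) (hf : 0 < f) (hef : e ∣ q ^ f - 1)
    (ξ : (AlgebraicClosure k)ˣ)
    (ξK : stmt9Subfield k (q ^ f - 1)) (hξK : (ξK : (AlgebraicClosure k)ˣ) = ξ)
    (d : ℕ)
    (hd : d = orderOf (QuotientGroup.mk (ξK ^ (q - 1)) :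
      (stmt9Subfield k (q ^ f - 1)) ⧸
        (powMonoidHom e : (stmt9Subfield k (q ^ f - 1)) →* _).range)) :
    IsLeast {m : ℕ | 0 < m ∧ f ∣ m ∧
      ∃ y : (AlgebraicClosure k)ˣ, y ^ (q ^ m - 1) = 1 ∧ y ^ e = ξ ^ (q - 1)} (d * f) := by
  subst hq hξK
  have := stmt9Subfield.finite (k := k) hf.ne'
  have hdpos : 0 < d := hd ▸ orderOf_pos _
  rw [stmt9Subfield.orderOf_mk_range_powMonoidHom hf.ne' hef] at hd
  have hz : (ξK.1 ^ (Fintype.card k - 1)) ^ (Fintype.card k ^ f - 1) = 1 := by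
    rw [← Subgroup.coe_pow]
    exact (ξK ^ _).2
  have key (s : ℕ) (hs : 0 < s) :
      (∃ y : (AlgebraicClosure k)ˣ, y ^ (Fintype.card k ^ (f * s) - 1) = 1 ∧
        y ^ e = ξK ^ (Fintype.card k - 1)) ↔ d ∣ s :=
    hd ▸ FiniteField.exists_pow_eq_iff_orderOf_dvd hf.ne' hs.ne' hef hz
  refine ⟨⟨Nat.mul_pos hdpos hf, dvd_mul_left f d, ?_⟩, ?_⟩
  · rw [mul_comm]
    exact (key d hdpos).mpr dvd_rfl
  · rintro _ ⟨hm, ⟨s, rfl⟩, hy⟩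
    have hs : 0 < s := Nat.pos_of_mul_pos_left hm
    rw [mul_comm]
    exact Nat.mul_le_mul_left f (Nat.le_of_dvd hs ((key s hs).mp hy))

/-- **Smallest extension where `ξ^(q-1)` becomes an `e`-th power.**  Let `k` be a finite field
with `q` elements, `k_f` its degree-`f` extension (realised inside an algebraic closure `Ω`
of `k` as `{x | x^(q^f) = x}`), `e ∣ q^f - 1`, and `ξ ∈ k_fˣ`.  Let `d` be the order of the
image of `ξ^(q-1)` in `k_fˣ/(k_fˣ)^e`.  Then the smallest (positive) multiple `f'` of `f`
such that `ξ^(q-1)` is an `e`-th power in the degree-`f'` extension `k_{f'}` of `k` is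
`f' = d·f`. -/
theorem stmt_9 (k : Type*) [Field k] [Fintype k] (q f e : ℕ)
    (hq : Fintype.card k = q) (hf : 0 < f) (he : 0 < e) (hef : e ∣ q ^ f - 1)
    (ξ : (AlgebraicClosure k)ˣ) (hξ : ξ ^ (q ^ f - 1) = 1)
    (ξK : stmt9Subfield k (q ^ f - 1)) (hξK : (ξK : (AlgebraicClosure k)ˣ) = ξ)
    (d : ℕ)
    (hd : d = orderOf (QuotientGroup.mk (ξK ^ (q - 1)) :
      (stmt9Subfield k (q ^ f - 1)) ⧸
        (powMonoidHom e : (stmt9Subfield k (q ^ f - 1)) →* _).range)) :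
    IsLeast {m : ℕ | 0 < m ∧ f ∣ m ∧
      ∃ y : (AlgebraicClosure k)ˣ, y ^ (q ^ m - 1) = 1 ∧ y ^ e = ξ ^ (q - 1)} (d * f) :=
  stmt_9_general k q f e hq hf hef ξ ξK hξK d hd
end

section
/- Let K be a local field with residue field of cardinality q and e > 0 prime to the residue characteristic. The number of ramified lines in K^×/K^{×e} (subgroups mapping isomorphically onto Z/eZ under the valuation map) equals gcd(q−1, e). -/
set_option linter.unusedVariables false

open Multiplicative Subgroup

open Multiplicative Subgroup

lemma aux_pow_fact {G : Type*} [CommGroup G] {e : ℕ} [NeZero e]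
    (f : G →* Multiplicative (ZMod e)) {g : G} (hg : f g = ofAdd 1) (a : ℤ) :
    f (g ^ a) = ofAdd ((a : ZMod e)) := by
  rw [map_zpow, hg, ← ofAdd_zsmul]; congr 1; simp

lemma aux_bij_zpowers {G : Type*} [CommGroup G] {e : ℕ} [NeZero e]
    (hG : ∀ x : G, x ^ e = 1)
    (f : G →* Multiplicative (ZMod e)) {g : G} (hg : f g = ofAdd 1) :
    Function.Bijective fun x : zpowers g => f (x : G) := by
  constructor
  · rintro ⟨x, a, rfl⟩ ⟨y, b, rfl⟩ hxy
    simp only [aux_pow_fact f hg] at hxy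
    have h2 : (a : ZMod e) = b := by
      have := congrArg Multiplicative.toAdd hxy
      simpa using this
    rw [ZMod.intCast_eq_intCast_iff] at h2
    obtain ⟨c, hc⟩ := h2.dvd
    have : g ^ b = g ^ a := by
      have : g ^ b = g ^ a * (g ^ (e : ℤ)) ^ c := by
        rw [← zpow_mul, ← zpow_add]; congr 1; omega
      rw [this, zpow_natCast, hG, one_zpow, mul_one]
    exact Subtype.ext this.symm
  · intro m
    refine ⟨⟨g ^ ((m.toAdd.val : ℤ)), ⟨_, rfl⟩⟩, ?_⟩
    simp only [aux_pow_fact f hg]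
    have : ((m.toAdd.val : ℤ) : ZMod e) = m.toAdd := by
      push_cast; exact ZMod.natCast_rightInverse m.toAdd
    rw [this]; simp

lemma aux_lines {G : Type*} [CommGroup G] {e : ℕ} [NeZero e]
    (hG : ∀ x : G, x ^ e = 1)
    (f : G →* Multiplicative (ZMod e)) :
    Nat.card {D : Subgroup G | Function.Bijective fun x : D => f (x : G)} =
      Nat.card {g : G | f g = ofAdd 1} := by
  refine Nat.card_congr ?_
  refine
    { toFun := fun D => ⟨((Equiv.ofBijective _ D.2).symm (ofAdd 1) : D.1), ?_⟩
      invFun := fun g => ⟨zpowers g.1, aux_bij_zpowers hG f g.2⟩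
      left_inv := ?_
      right_inv := ?_ }
  · exact (Equiv.ofBijective _ D.2).apply_symm_apply (ofAdd 1)
  · rintro ⟨D, hD⟩
    ext1
    set g : G := (((Equiv.ofBijective _ hD).symm (ofAdd 1) : D) : G) with hgdef
    have hgD : g ∈ D := ((Equiv.ofBijective _ hD).symm (ofAdd 1)).2
    have hfg : f g = ofAdd 1 := (Equiv.ofBijective _ hD).apply_symm_apply (ofAdd 1)
    refine le_antisymm ?_ ?_
    · rw [zpowers_le]; exact hgD
    · intro x hx
      have h1 : f (g ^ ((f x).toAdd.val : ℤ)) = f x := by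
        rw [aux_pow_fact f hfg]
        have : (((f x).toAdd.val : ℤ) : ZMod e) = (f x).toAdd := by
          push_cast; exact ZMod.natCast_rightInverse _
        rw [this]; simp
      have h2 : (⟨x, hx⟩ : D) = ⟨g ^ ((f x).toAdd.val : ℤ), D.zpow_mem hgD _⟩ :=
        hD.1 h1.symm
      have h3 : x = g ^ ((f x).toAdd.val : ℤ) := congrArg Subtype.val h2
      rw [h3]
      exact zpow_mem (mem_zpowers g) _
  · rintro ⟨g, hg⟩
    ext1
    have hmem : g ∈ zpowers g := mem_zpowers g
    have : (Equiv.ofBijective _ (aux_bij_zpowers hG f hg)).symm (ofAdd 1) = ⟨g, hmem⟩ := by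
      rw [Equiv.symm_apply_eq]
      exact hg.symm
    show (((Equiv.ofBijective (fun x : zpowers g => f (x : G))
        (aux_bij_zpowers hG f hg)).symm (ofAdd 1) : zpowers g) : G) = g
    rw [this]
open Multiplicative Subgroup

lemma aux_fiber {G H : Type*} [Group G] [Group H] (f : G →* H) (c : H) (t : G) (ht : f t = c) :
    Nat.card {g : G | f g = c} = Nat.card f.ker := by
  refine Nat.card_congr ⟨fun g => ⟨g.1 * t⁻¹, ?_⟩, fun x => ⟨x.1 * t, ?_⟩, ?_, ?_⟩
  · have := g.2
    simp only [Set.mem_setOf_eq] at this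
    simp [MonoidHom.mem_ker, this, ht]
  · have := x.2
    rw [MonoidHom.mem_ker] at this
    simp [Set.mem_setOf_eq, this, ht]
  · rintro ⟨g, hg⟩; simp
  · rintro ⟨x, hx⟩; simp

lemma aux_count {k : Type*} [Field k] [Fintype k] (q e : ℕ) (hq : Fintype.card k = q)
    (he : 0 < e) :
    Nat.card (kˣ ⧸ (powMonoidHom e : kˣ →* kˣ).range) = Nat.gcd (q - 1) e := by
  classical
  obtain ⟨g, hg⟩ := IsCyclic.exists_generator (α := kˣ)
  set R : Subgroup kˣ := (powMonoidHom e : kˣ →* kˣ).range with hRdef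
  have hR : R = zpowers (g ^ e) := by
    ext x
    constructor
    · rintro ⟨z, rfl⟩
      obtain ⟨a, ha⟩ := hg z
      refine ⟨a, ?_⟩
      rw [powMonoidHom_apply, ← ha]
      simp [← zpow_natCast, ← zpow_mul, mul_comm]
    · rintro ⟨a, rfl⟩
      refine ⟨g ^ a, ?_⟩
      rw [powMonoidHom_apply]
      simp [← zpow_natCast, ← zpow_mul, mul_comm]
  have horder : orderOf g = q - 1 := by
    rw [orderOf_eq_card_of_forall_mem_zpowers hg, Nat.card_eq_fintype_card,
      Fintype.card_units, hq]
  have hcardR : Nat.card R = (q - 1) / Nat.gcd (q - 1) e := by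
    rw [hR, Nat.card_zpowers, orderOf_pow, horder]
  have hq2 : 1 < q := hq ▸ Fintype.one_lt_card
  have hn : 0 < q - 1 := by omega
  have hd : Nat.gcd (q - 1) e ∣ q - 1 := Nat.gcd_dvd_left _ _
  have hdpos : 0 < Nat.gcd (q - 1) e := Nat.gcd_pos_of_pos_right _ he
  have hcard : Nat.card kˣ = Nat.card (kˣ ⧸ R) * Nat.card R :=
    Subgroup.card_eq_card_quotient_mul_card_subgroup R
  have hck : Nat.card kˣ = q - 1 := by
    rw [Nat.card_eq_fintype_card, Fintype.card_units, hq]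
  rw [hck, hcardR] at hcard
  have hquot : 0 < (q - 1) / Nat.gcd (q - 1) e := Nat.div_pos (Nat.le_of_dvd hn hd) hdpos
  have key : Nat.card (kˣ ⧸ R) * ((q - 1) / Nat.gcd (q - 1) e) =
      Nat.gcd (q - 1) e * ((q - 1) / Nat.gcd (q - 1) e) := by
    rw [← hcard, Nat.mul_div_cancel' hd]
  exact Nat.eq_of_mul_eq_mul_right hquot key

/-- **The number of ramified lines.**  Let `K` be a local field with finite residue field `k`
of cardinality `q`, and let `e > 0` be prime to the residue characteristic.  The local field
structure is encoded by the surjective normalised valuation `w : Kˣ →* ℤ`, the surjective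
reduction map `ρ : O^× = Ker w →* kˣ` whose kernel is the group `U₁` of `1`-units, on which
the `e`-th power map is bijective.  A *ramified line* is a subgroup `D ⊆ Kˣ/(Kˣ)^e` mapping
isomorphically onto `ℤ/eℤ` under the map `w̄` induced by the valuation.  Then the number of
ramified lines equals `gcd(q - 1, e)`. -/
theorem stmt_15 (K k : Type*) [Field K] [Field k] [Fintype k] (q e : ℕ)
    (hq : Fintype.card k = q) (he : 0 < e) (hep : Nat.Coprime e (ringChar k))
    (w : Kˣ →* Multiplicative ℤ) (hw : Function.Surjective w)
    (ρ : w.ker →* kˣ) (hρ : Function.Surjective ρ)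
    (hU₁ : Function.Bijective fun u : ρ.ker => u ^ e)
    (wbar : (Kˣ ⧸ (powMonoidHom e : Kˣ →* Kˣ).range) →* Multiplicative (ZMod e))
    (hwbar : ∀ u : Kˣ, wbar (QuotientGroup.mk u) =
      Multiplicative.ofAdd ((Multiplicative.toAdd (w u) : ℤ) : ZMod e)) :
    Nat.card {D : Subgroup (Kˣ ⧸ (powMonoidHom e : Kˣ →* Kˣ).range) |
      Function.Bijective fun x : D => wbar (x : Kˣ ⧸ (powMonoidHom e : Kˣ →* Kˣ).range)} =
      Nat.gcd (q - 1) e := by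
  classical
  haveI : NeZero e := ⟨he.ne'⟩
  have hGpow : ∀ x : Kˣ ⧸ (powMonoidHom e : Kˣ →* Kˣ).range, x ^ e = 1 := by
    intro x
    obtain ⟨u, rfl⟩ := QuotientGroup.mk_surjective x
    have : (QuotientGroup.mk u : Kˣ ⧸ (powMonoidHom e : Kˣ →* Kˣ).range) ^ e = QuotientGroup.mk (u ^ e) := by
      rw [← QuotientGroup.mk_pow]
    rw [this]
    exact (QuotientGroup.eq_one_iff _).2 ⟨u, rfl⟩
  refine (aux_lines (G := Kˣ ⧸ (powMonoidHom e : Kˣ →* Kˣ).range) (e := e) hGpow wbar).trans ?_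
  obtain ⟨π, hπ⟩ := hw (ofAdd 1)
  have hπ1 : wbar (QuotientGroup.mk π) = ofAdd (1 : ZMod e) := by
    rw [hwbar, hπ]
    norm_num
  rw [aux_fiber wbar (ofAdd 1) _ hπ1]
  set ψ : w.ker →* Kˣ ⧸ (powMonoidHom e : Kˣ →* Kˣ).range := (QuotientGroup.mk' (powMonoidHom e : Kˣ →* Kˣ).range).comp w.ker.subtype with hψ
  have hrange : ψ.range = wbar.ker := by
    ext x
    simp only [MonoidHom.mem_range, MonoidHom.mem_ker]
    constructor
    · rintro ⟨u, rfl⟩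
      have hu : w (u : Kˣ) = 1 := u.2
      have hψu : ψ u = QuotientGroup.mk (u : Kˣ) := rfl
      rw [hψu, hwbar, hu]
      simp
    · intro hx
      obtain ⟨u, rfl⟩ := QuotientGroup.mk_surjective x
      rw [hwbar] at hx
      have hdvd : (e : ℤ) ∣ (Multiplicative.toAdd (w u) : ℤ) := by
        rw [← ZMod.intCast_zmod_eq_zero_iff_dvd]
        have := congrArg Multiplicative.toAdd hx
        simpa using this
      obtain ⟨m, hm⟩ := hdvd
      obtain ⟨v, hv⟩ := hw (ofAdd m)
      have hmem : u * (v ^ e)⁻¹ ∈ w.ker := by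
        rw [MonoidHom.mem_ker]
        apply Multiplicative.toAdd.injective
        rw [map_mul, map_inv, map_pow, hv]
        simp only [toAdd_mul, toAdd_inv, toAdd_pow, toAdd_ofAdd, toAdd_one, hm, smul_eq_mul]
        ring
      refine ⟨⟨u * (v ^ e)⁻¹, hmem⟩, ?_⟩
      show QuotientGroup.mk (u * (v ^ e)⁻¹) = QuotientGroup.mk u
      rw [QuotientGroup.eq]
      refine ⟨v, ?_⟩
      rw [powMonoidHom_apply]
      group
  have h1 : Nat.card wbar.ker = Nat.card (w.ker ⧸ ψ.ker) := by
    rw [← hrange]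
    exact (Nat.card_congr (QuotientGroup.quotientKerEquivRange ψ).toEquiv).symm
  have hker1 : ψ.ker = (powMonoidHom e : w.ker →* w.ker).range := by
    ext u
    rw [MonoidHom.mem_ker]
    have hψu : ψ u = QuotientGroup.mk (u : Kˣ) := rfl
    rw [hψu, QuotientGroup.eq_one_iff]
    constructor
    · rintro ⟨y, hy⟩
      have hy' : y ^ e = (u : Kˣ) := hy
      have hyk : y ∈ w.ker := by
        rw [MonoidHom.mem_ker]
        have h1 : (w y) ^ e = 1 := by
          rw [← map_pow, hy']
          exact u.2
        apply Multiplicative.toAdd.injective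
        have h2 := congrArg Multiplicative.toAdd h1
        simp only [toAdd_pow, toAdd_one, smul_eq_mul, nsmul_eq_mul] at h2 ⊢
        have he' : (e : ℤ) ≠ 0 := by exact_mod_cast he.ne'
        rcases mul_eq_zero.1 h2 with h | h
        · exact absurd h he'
        · exact h
      exact ⟨⟨y, hyk⟩, Subtype.ext hy'⟩
    · rintro ⟨y, rfl⟩
      exact ⟨(y : Kˣ), by simp [powMonoidHom_apply]⟩
  set f2 : w.ker →* kˣ ⧸ (powMonoidHom e : kˣ →* kˣ).range :=
    (QuotientGroup.mk' _).comp ρ with hf2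
  have hf2surj : Function.Surjective f2 := (QuotientGroup.mk'_surjective _).comp hρ
  have hker2 : f2.ker = (powMonoidHom e : w.ker →* w.ker).range := by
    ext u
    rw [MonoidHom.mem_ker]
    have hf2u : f2 u = QuotientGroup.mk (ρ u) := rfl
    rw [hf2u, QuotientGroup.eq_one_iff]
    constructor
    · rintro ⟨z, hz⟩
      rw [powMonoidHom_apply] at hz
      obtain ⟨v, hv⟩ := hρ z
      have hmem : u * (v ^ e)⁻¹ ∈ ρ.ker := by
        rw [MonoidHom.mem_ker, map_mul, map_inv, map_pow, hv, hz]
        simp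
      obtain ⟨s, hs⟩ := hU₁.2 ⟨u * (v ^ e)⁻¹, hmem⟩
      refine ⟨(s : w.ker) * v, ?_⟩
      rw [powMonoidHom_apply, mul_pow]
      have hs' : ((s : w.ker)) ^ e = u * (v ^ e)⁻¹ := by
        have := congrArg Subtype.val hs
        simpa using this
      rw [hs']
      group
    · rintro ⟨y, rfl⟩
      refine ⟨ρ y, ?_⟩
      rw [powMonoidHom_apply, ← map_pow]
      rfl
  have h2 : Nat.card (w.ker ⧸ f2.ker) = Nat.card (kˣ ⧸ (powMonoidHom e : kˣ →* kˣ).range) :=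
    Nat.card_congr (QuotientGroup.quotientKerEquivOfSurjective f2 hf2surj).toEquiv
  rw [h1, hker1, ← hker2, h2, aux_count q e hq he]
end
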